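/- Let Q be a symmetric bilinear form on a ℤ-module, K a fixed element, and k(C) := (Q(C,C) − Q(K,C))/2. Suppose A = Σᵢ rᵢ Aᵢ is a finite sum with positive integers rᵢ, where Q(Aᵢ,Aᵢ) ≥ 0 for all i, Q(Aᵢ,Aⱼ) ≥ 0 for all i ≠ j, and k(Aᵢ) ≥ 0 for all i. Then 2k(A) ≥ Σᵢ 2rᵢ k(Aᵢ) ≥ Σᵢ 2k(Aᵢ). -/
import Mathlib


/-- if A = Σ rᵢ Aᵢ with positive multiplicities, nonnegative squares,
    nonnegative mutual pairings and nonnegative point counts, then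
    2k(A) ≥ Σ 2rᵢ k(Aᵢ) ≥ Σ 2k(Aᵢ). -/
theorem stmt_3 (H : Type*) [AddCommGroup H] [Module ℤ H]
    (Q : H →ₗ[ℤ] H →ₗ[ℤ] ℤ) (hsymm : ∀ x y, Q x y = Q y x)
    (K : H) (ι : Type*) [Fintype ι] (r : ι → ℤ) (C : ι → H) (A : H)
    (hA : A = ∑ i, r i • C i)
    (hr : ∀ i, 0 < r i)
    (hsq : ∀ i, 0 ≤ Q (C i) (C i))
    (hij : ∀ i j, i ≠ j → 0 ≤ Q (C i) (C j))
    (heven : ∀ i, Even (Q (C i) (C i) - Q K (C i)))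
    (hk : ∀ i, 0 ≤ (Q (C i) (C i) - Q K (C i)) / 2) :
    (∑ i, 2 * r i * ((Q (C i) (C i) - Q K (C i)) / 2)) ≤ Q A A - Q K A ∧
    (∑ i, 2 * ((Q (C i) (C i) - Q K (C i)) / 2))
      ≤ ∑ i, 2 * r i * ((Q (C i) (C i) - Q K (C i)) / 2) := by
  have h2 : ∀ i, 2 * ((Q (C i) (C i) - Q K (C i)) / 2) = Q (C i) (C i) - Q K (C i) :=
    fun i => Int.two_mul_ediv_two_of_even (heven i)
  constructor
  · have hQAA : Q A A = ∑ i, ∑ j, r i * (r j * Q (C i) (C j)) := by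
      rw [hA, map_sum, Finset.sum_comm]
      refine Finset.sum_congr rfl fun x _ => ?_
      rw [map_sum, LinearMap.sum_apply]
      refine Finset.sum_congr rfl fun i _ => ?_
      rw [map_zsmul, zsmul_eq_mul, hsymm, map_zsmul, zsmul_eq_mul, hsymm (C x) (C i)]
      push_cast
      ring
    have hQKA : Q K A = ∑ i, r i * Q K (C i) := by
      simp [hA, map_sum, map_smul, smul_eq_mul]
    have key : ∑ i, r i * Q (C i) (C i) ≤ Q A A := by
      rw [hQAA]
      apply Finset.sum_le_sum
      intro i _
      calc r i * Q (C i) (C i) ≤ r i * (r i * Q (C i) (C i)) := by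
            have h1 : (1:ℤ) ≤ r i := hr i
            exact le_mul_of_one_le_left (mul_nonneg (by linarith) (hsq i)) h1
        _ ≤ ∑ j, r i * (r j * Q (C i) (C j)) := by
            apply Finset.single_le_sum (f := fun j => r i * (r j * Q (C i) (C j)))
              (fun j _ => ?_) (Finset.mem_univ i)
            rcases eq_or_ne i j with rfl | hne
            · exact mul_nonneg (hr i).le (mul_nonneg (hr i).le (hsq i))
            · have := hij i j hne
              have := hr i
              have := hr j
              positivity
    calc ∑ i, 2 * r i * ((Q (C i) (C i) - Q K (C i)) / 2)
        = ∑ i, r i * (Q (C i) (C i) - Q K (C i)) := by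
          refine Finset.sum_congr rfl fun i _ => ?_
          rw [mul_assoc, mul_left_comm, h2 i]
      _ = (∑ i, r i * Q (C i) (C i)) - ∑ i, r i * Q K (C i) := by
          rw [← Finset.sum_sub_distrib]; ring_nf
      _ ≤ Q A A - Q K A := by rw [hQKA]; omega
  · apply Finset.sum_le_sum
    intro i _
    have := hk i
    have := hr i
    nlinarith
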